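/- The multilinear polynomial ABC over ℤ_p in indeterminates A, B, C, X, Z₁, Z₂ is not in the ℤ_p-span of the set of products {P_i·P_j}, where P = {1, X, A, XA, B, XB, AB + XZ₁, Z₁, C + XZ₂, Z₂}. Equivalently, no ℤ_p-linear combination of pairwise products of elements of P equals ABC. -/

import Mathlib

/-!
Let `φ` be the linear functional "coefficient of `ABC` minus coefficient of `ABXZ₂`". The only
product `P_i P_j` involving either monomial is `(AB + XZ₁)(C + XZ₂) = ABC + ABXZ₂ + XZ₁C + X²Z₁Z₂`,
where they cancel. So `φ` kills the span of the products, but `φ (ABC) = 1`.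
-/

open MvPolynomial

theorem Submodule.notMem_span_of_map_eq_zero {R M N : Type*} [Semiring R] [AddCommMonoid M]
    [AddCommMonoid N] [Module R M] [Module R N] (φ : M →ₗ[R] N) {s : Set M} {x : M}
    (hs : ∀ y ∈ s, φ y = 0) (hx : φ x ≠ 0) : x ∉ Submodule.span R s :=
  fun h => hx (Submodule.span_le (p := LinearMap.ker φ) |>.mpr hs h)

namespace P3DH

variable {R : Type*} [CommRing R]

noncomputable def exponents : Fin 10 → MvPolynomial (Fin 6) R :=
  ![1, X 3, X 0, X 3 * X 0, X 1, X 3 * X 1, X 0 * X 1 + X 3 * X 4, X 4, X 2 + X 3 * X 5, X 5]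

/-- `coeff ABC - coeff ABXZ₂`: on squarefree monomials, iterated partial derivatives evaluated
at `0` read off the coefficient. -/
noncomputable def abcFunctional : MvPolynomial (Fin 6) R →ₗ[R] R :=
  (aeval 0).toLinearMap ∘ₗ (pderiv 0).toLinearMap ∘ₗ (pderiv 1).toLinearMap ∘ₗ
    ((pderiv 2).toLinearMap - (pderiv 3).toLinearMap ∘ₗ (pderiv 5).toLinearMap)

theorem abcFunctional_exponents_mul (i j : Fin 10) :
    abcFunctional (exponents i * exponents j : MvPolynomial (Fin 6) R) = 0 := by
  fin_cases i <;> fin_cases j <;> simp [abcFunctional, exponents, pderiv_X]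

theorem abcFunctional_abc : abcFunctional (X 0 * X 1 * X 2 : MvPolynomial (Fin 6) R) = 1 := by
  simp [abcFunctional, pderiv_X]

end P3DH

open MvPolynomial in
theorem stmt_15 (p : ℕ) [Fact p.Prime] :
    let A : MvPolynomial (Fin 6) (ZMod p) := X 0
    let B : MvPolynomial (Fin 6) (ZMod p) := X 1
    let C : MvPolynomial (Fin 6) (ZMod p) := X 2
    let Xv : MvPolynomial (Fin 6) (ZMod p) := X 3
    let Z₁ : MvPolynomial (Fin 6) (ZMod p) := X 4
    let Z₂ : MvPolynomial (Fin 6) (ZMod p) := X 5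
    let P : Fin 10 → MvPolynomial (Fin 6) (ZMod p) :=
      ![1, Xv, A, Xv * A, B, Xv * B, A * B + Xv * Z₁, Z₁, C + Xv * Z₂, Z₂]
    A * B * C ∉ Submodule.span (ZMod p)
      (Set.range fun ij : Fin 10 × Fin 10 => P ij.1 * P ij.2) := by
  intro A B C Xv Z₁ Z₂ P
  refine Submodule.notMem_span_of_map_eq_zero P3DH.abcFunctional ?_ ?_
  · rintro - ⟨⟨i, j⟩, rfl⟩
    exact P3DH.abcFunctional_exponents_mul i j
  · rw [P3DH.abcFunctional_abc]
    exact one_ne_zero
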